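/- Let a, b, d < 0 and c ≥ c^+ = 2√(d(a−1)) − b. Then both roots x_g^± of g(z) = (1−a)z² − (b+c)z − d are real and positive, and consequently W_n(x_g^±) > 0 for all n ≥ 0, where W_n is the normalized sequence. -/

import Mathlib

/-!
Since `b + c ≥ c⁺ + b = 2√(d(a-1)) ≥ 0`, the discriminant `(b+c)² - 4d(a-1)` of `g` is nonnegative,
and a root `x ≤ 0` is impossible because then `(1-a)x² - (b+c)x - d ≥ -d > 0`. Finally `g(x) = 0` says
exactly that `x² = (ax + b)x + (cx + d)`, so `n ↦ xⁿ` obeys the recurrence of `W n` evaluated at `x`,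
with the same initial values; hence `W_n(x) = xⁿ > 0`.
-/

open Polynomial

theorem eval_eq_pow_of_sq_eq {R : Type*} [CommRing R] (a b c d x : R) (W : ℕ → R[X])
    (hW0 : W 0 = 1) (hW1 : W 1 = X)
    (hrec : ∀ n, 2 ≤ n →
      W n = (C a * X + C b) * W (n - 1) + (C c * X + C d) * W (n - 2))
    (hx : x ^ 2 = (a * x + b) * x + (c * x + d)) (n : ℕ) :
    (W n).eval x = x ^ n := by
  induction n using Nat.strong_induction_on with
  | _ n ih =>
    match n, ih with
    | 0, _ => simp [hW0]
    | 1, _ => simp [hW1]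
    | k + 2, ih =>
      rw [hrec (k + 2) (by omega), show k + 2 - 1 = k + 1 from rfl, Nat.add_sub_cancel]
      simp only [eval_add, eval_mul, eval_C, eval_X]
      rw [ih (k + 1) (by omega), ih k (by omega), pow_add x k 2, hx]
      ring

theorem four_mul_le_sq_of_two_mul_sqrt_le {s t : ℝ} (hs : 0 ≤ s) (h : 2 * Real.sqrt s ≤ t) :
    4 * s ≤ t ^ 2 := by
  have hsq := Real.sq_sqrt hs
  nlinarith [Real.sqrt_nonneg s]

theorem pos_of_quadratic_eq_zero {p q r x : ℝ} (hp : 0 ≤ p) (hq : 0 ≤ q) (hr : r < 0)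
    (hx : p * x ^ 2 - q * x - r = 0) : 0 < x := by
  by_contra! h
  nlinarith [mul_nonneg hq (neg_nonneg.2 h), mul_nonneg hp (sq_nonneg x)]

theorem stmt_12_general (a b c d : ℝ) (ha : a < 0) (hd : d < 0)
    (hc : 2 * Real.sqrt (d * (a - 1)) - b ≤ c)
    (W : ℕ → Polynomial ℝ)
    (hW0 : W 0 = 1) (hW1 : W 1 = X)
    (hrec : ∀ n, 2 ≤ n →
      W n = (C a * X + C b) * W (n - 1) + (C c * X + C d) * W (n - 2)) :
    0 ≤ (b + c) ^ 2 + 4 * d * (1 - a) ∧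
    ∀ x : ℝ, (1 - a) * x ^ 2 - (b + c) * x - d = 0 →
      0 < x ∧ ∀ n : ℕ, 0 < (W n).eval x := by
  have hda : 0 ≤ d * (a - 1) := mul_nonneg_of_nonpos_of_nonpos hd.le (by linarith)
  have hbc : 2 * Real.sqrt (d * (a - 1)) ≤ b + c := by linarith
  refine ⟨by nlinarith [four_mul_le_sq_of_two_mul_sqrt_le hda hbc], fun x hx => ?_⟩
  have hxpos : 0 < x :=
    pos_of_quadratic_eq_zero (by linarith) (by linarith [Real.sqrt_nonneg (d * (a - 1))]) hd hx
  refine ⟨hxpos, fun n => ?_⟩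
  rw [eval_eq_pow_of_sq_eq a b c d x W hW0 hW1 hrec (by linear_combination hx) n]
  exact pow_pos hxpos n

theorem stmt_12 (a b c d : ℝ) (ha : a < 0) (hb : b < 0) (hd : d < 0)
    (hc : 2 * Real.sqrt (d * (a - 1)) - b ≤ c)
    (W : ℕ → Polynomial ℝ)
    (hW0 : W 0 = 1) (hW1 : W 1 = X)
    (hrec : ∀ n, 2 ≤ n →
      W n = (C a * X + C b) * W (n - 1) + (C c * X + C d) * W (n - 2)) :
    0 ≤ (b + c) ^ 2 + 4 * d * (1 - a) ∧
    ∀ x : ℝ, (1 - a) * x ^ 2 - (b + c) * x - d = 0 →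
      0 < x ∧ ∀ n : ℕ, 0 < (W n).eval x :=
  stmt_12_general a b c d ha hd hc W hW0 hW1 hrec
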